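/- Let F : R^d → R have L-Lipschitz gradient, H = B B^T with minimum eigenvalue at least R > 0, b = B^T g, and suppose g satisfies ∇F(ψ_t)^T g + (F(ψ_t) - d + ζ) ≤ 0. Assume ψ_t is in the in-boundary set, i.e., F(ψ_t) - d + ζ ≤ √(2ε)‖B^{-1}∇F(ψ_t)‖ ≤ √(2ε) M with √(2ε) M ≤ ζ. If the step size β_t satisfies 0 < β_t ≤ 1 and β_t = (2√(2ε) m R)/(L‖b‖²) β'_t with β'_t < 1 and m ≤ M, then F(ψ_t + β_t g) ≤ d. -/

import Mathlib

/-!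
By the descent lemma, `F (ψ + β g) ≤ F ψ + β ⟪∇F ψ, g⟫ + L/2 β² ‖g‖²`. The constraint on `g`
bounds the linear term by `-β (F ψ - d + ζ)`. Since `‖b‖² = gᵀ H g ≥ R ‖g‖²`, the step-size formula
bounds the quadratic term by `β √(2ε) m β' ≤ β √(2ε) M ≤ β ζ`. Hence
`F (ψ + β g) - d ≤ (1 - β) (F ψ - d) ≤ 0`, because in the in-boundary set
`F ψ - d + ζ ≤ √(2ε) M ≤ ζ`.
-/

open RealInnerProductSpace

open Set in
theorem descent_lemma {E : Type*} [NormedAddCommGroup E] [InnerProductSpace ℝ E] [CompleteSpace E]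
    {F : E → ℝ} (hF : Differentiable ℝ F) {K : NNReal} (hK : LipschitzWith K (gradient F))
    (x v : E) : F (x + v) ≤ F x + ⟪gradient F x, v⟫ + K / 2 * ‖v‖ ^ 2 := by
  have hderiv (t : ℝ) :
      HasDerivAt (fun t : ℝ => F (x + t • v)) ⟪gradient F (x + t • v), v⟫ t := by
    have hline : HasDerivAt (fun t : ℝ => x + t • v) v t := by
      simpa using ((hasDerivAt_id t).smul_const v).const_add x
    rw [inner_gradient_left]
    exact (hF _).hasFDerivAt.comp_hasDerivAt t hline
  have hbound (t : ℝ) :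
      HasDerivAt (fun t : ℝ => F x + t * ⟪gradient F x, v⟫ + K / 2 * t ^ 2 * ‖v‖ ^ 2)
        (⟪gradient F x, v⟫ + K * t * ‖v‖ ^ 2) t := by
    refine ((((hasDerivAt_id t).mul_const ⟪gradient F x, v⟫).const_add (F x)).add
      (((hasDerivAt_pow 2 t).const_mul ((K : ℝ) / 2)).mul_const (‖v‖ ^ 2))).congr_deriv ?_
    push_cast
    ring
  have hslope (t : ℝ) (ht : t ∈ Ico (0 : ℝ) 1) :
      ⟪gradient F (x + t • v), v⟫ ≤ ⟪gradient F x, v⟫ + K * t * ‖v‖ ^ 2 := by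
    have hlip : ‖gradient F (x + t • v) - gradient F x‖ ≤ K * (t * ‖v‖) := by
      simpa [dist_eq_norm, norm_smul, abs_of_nonneg ht.1] using hK.dist_le_mul (x + t • v) x
    have := real_inner_le_norm (gradient F (x + t • v) - gradient F x) v
    rw [inner_sub_left] at this
    nlinarith [norm_nonneg v]
  simpa using image_le_of_deriv_right_le_deriv_boundary
    (fun t _ => (hderiv t).continuousAt.continuousWithinAt) (fun t _ => (hderiv t).hasDerivWithinAt)
    (by simp) (fun t _ => (hbound t).continuousAt.continuousWithinAt)
    (fun t _ => (hbound t).hasDerivWithinAt) hslope (right_mem_Icc.2 zero_le_one)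

theorem inner_toEuclideanLin_mul_transpose_self {ι : Type*} [Fintype ι] [DecidableEq ι]
    (B : Matrix ι ι ℝ) (x : EuclideanSpace ℝ ι) :
    ⟪x, Matrix.toEuclideanLin (B * B.transpose) x⟫ = ‖Matrix.toEuclideanLin B.transpose x‖ ^ 2 := by
  have hadj : Matrix.toEuclideanLin B = (Matrix.toEuclideanLin B.transpose).adjoint := by
    rw [← Matrix.toEuclideanLin_conjTranspose_eq_adjoint,
      Matrix.conjTranspose_eq_transpose_of_trivial, Matrix.transpose_transpose]
  rw [Matrix.toLpLin_mul_same, LinearMap.comp_apply, hadj, LinearMap.adjoint_inner_right,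
    real_inner_self_eq_norm_sq]

theorem quadratic_term_le_of_stepSize {L R x y c β β' : ℝ} (hL : 0 < L) (hR : 0 < R)
    (hβ : 0 < β) (hxy : R * x ≤ y) (hβeq : β = 2 * c * R / (L * y) * β') :
    L / 2 * β ^ 2 * x ≤ β * (c * β') := by
  have hy : y ≠ 0 := by
    rintro rfl
    simp [hβeq] at hβ
  calc L / 2 * β ^ 2 * x ≤ L / 2 * β ^ 2 * (y / R) := by
        gcongr
        rwa [le_div_iff₀' hR]
    _ = β * (c * β') := by
        have hLβy : L * β * y = 2 * c * R * β' := by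
          rw [hβeq]
          field_simp
        field_simp
        linear_combination hLβy

theorem stmt_4_general {n : ℕ} (F : EuclideanSpace ℝ (Fin n) → ℝ)
    (hdiff : Differentiable ℝ F) (L : ℝ) (hL : 0 < L)
    (hLip : LipschitzWith (Real.toNNReal L) (gradient F))
    (B H : Matrix (Fin n) (Fin n) ℝ) (hHB : H = B * B.transpose)
    (R : ℝ) (hR : 0 < R)
    (heig : ∀ x : EuclideanSpace ℝ (Fin n), R * ‖x‖ ^ 2 ≤ ⟪x, Matrix.toEuclideanLin H x⟫)
    (ε ζ dth M m : ℝ) (hm : 0 < m) (hmM : m ≤ M)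
    (ψt g b : EuclideanSpace ℝ (Fin n))
    (hb : b = Matrix.toEuclideanLin B.transpose g)
    (hconstr : ⟪gradient F ψt, g⟫ + (F ψt - dth + ζ) ≤ 0)
    (hin : F ψt - dth + ζ ≤
      Real.sqrt (2 * ε) * ‖Matrix.toEuclideanLin B⁻¹ (gradient F ψt)‖)
    (hgradM : Real.sqrt (2 * ε) * ‖Matrix.toEuclideanLin B⁻¹ (gradient F ψt)‖ ≤
      Real.sqrt (2 * ε) * M)
    (hMζ : Real.sqrt (2 * ε) * M ≤ ζ)
    (βt β't : ℝ) (hβpos : 0 < βt) (hβle : βt ≤ 1)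
    (hβ't : β't < 1)
    (hβ : βt = (2 * Real.sqrt (2 * ε) * m * R) / (L * ‖b‖ ^ 2) * β't) :
    F (ψt + βt • g) ≤ dth := by
  set s := Real.sqrt (2 * ε)
  have hgb : R * ‖g‖ ^ 2 ≤ ‖b‖ ^ 2 := by
    simpa only [hb, hHB, inner_toEuclideanLin_mul_transpose_self] using heig g
  have hquad : L / 2 * ‖βt • g‖ ^ 2 ≤ βt * (s * m * β't) := by
    rw [norm_smul, Real.norm_of_nonneg hβpos.le, mul_pow, ← mul_assoc]
    exact quadratic_term_le_of_stepSize hL hR hβpos hgb (by rw [hβ]; ring)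
  have hslack : F ψt - dth + ζ ≤ ζ := (hin.trans hgradM).trans hMζ
  have hstep : s * m * β't ≤ ζ := calc
    s * m * β't ≤ s * m := mul_le_of_le_one_right (by positivity) hβ't.le
    _ ≤ s * M := by gcongr
    _ ≤ ζ := hMζ
  have hdesc := descent_lemma hdiff hLip ψt (βt • g)
  rw [Real.coe_toNNReal L hL.le, real_inner_smul_right] at hdesc
  calc F (ψt + βt • g) ≤ F ψt + βt * ⟪gradient F ψt, g⟫ + βt * (s * m * β't) := by linarith
    _ ≤ F ψt - βt * (F ψt - dth + ζ) + βt * ζ := by nlinarith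
    _ ≤ dth := by nlinarith [mul_nonneg (sub_nonneg.2 hβle) (sub_nonneg.2 hslack)]

/-- Constraint satisfaction in the in-boundary case: if
`∇F(ψₜ)ᵀ g + (F(ψₜ) - d + ζ) ≤ 0`, the iterate is in-boundary
(`F(ψₜ) - d + ζ ≤ √(2ε)‖B⁻¹∇F(ψₜ)‖ ≤ √(2ε)M`) with `√(2ε)M ≤ ζ`, and the step size
satisfies `0 < βₜ ≤ 1`, `βₜ = (2√(2ε)mR)/(L‖b‖²)·β'ₜ` with `β'ₜ < 1` and `m ≤ M`,
then `F(ψₜ + βₜ g) ≤ d`. -/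
theorem stmt_4 {n : ℕ} (F : EuclideanSpace ℝ (Fin n) → ℝ)
    (hdiff : Differentiable ℝ F) (L : ℝ) (hL : 0 < L)
    (hLip : LipschitzWith (Real.toNNReal L) (gradient F))
    (B H : Matrix (Fin n) (Fin n) ℝ) (hHB : H = B * B.transpose) (hH : H.PosDef)
    (R : ℝ) (hR : 0 < R)
    (heig : ∀ x : EuclideanSpace ℝ (Fin n), R * ‖x‖ ^ 2 ≤ ⟪x, Matrix.toEuclideanLin H x⟫)
    (ε ζ dth M m : ℝ) (hε : 0 < ε) (hζ : 0 < ζ) (hm : 0 < m) (hmM : m ≤ M)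
    (ψt g b : EuclideanSpace ℝ (Fin n))
    (hb : b = Matrix.toEuclideanLin B.transpose g)
    (hconstr : ⟪gradient F ψt, g⟫ + (F ψt - dth + ζ) ≤ 0)
    (hin : F ψt - dth + ζ ≤
      Real.sqrt (2 * ε) * ‖Matrix.toEuclideanLin B⁻¹ (gradient F ψt)‖)
    (hgradM : Real.sqrt (2 * ε) * ‖Matrix.toEuclideanLin B⁻¹ (gradient F ψt)‖ ≤
      Real.sqrt (2 * ε) * M)
    (hMζ : Real.sqrt (2 * ε) * M ≤ ζ)
    (βt β't : ℝ) (hβpos : 0 < βt) (hβle : βt ≤ 1)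
    (hβ't : β't < 1)
    (hβ : βt = (2 * Real.sqrt (2 * ε) * m * R) / (L * ‖b‖ ^ 2) * β't) :
    F (ψt + βt • g) ≤ dth :=
  stmt_4_general F hdiff L hL hLip B H hHB R hR heig ε ζ dth M m hm hmM ψt g b hb hconstr hin hgradM
    hMζ βt β't hβpos hβle hβ't hβ
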